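/- arXiv:2502.02085 — 4 statements merged into one kernel-verified Lean document; each statement's English description precedes it below -/
import Mathlib

section
/- Let P be a finite set, Q ⊆ P nonempty, S a set of centers, and δ ∈ (0,1). Define the mixed distribution D(z) = (1-δ)·Δ(z,S)/Δ(P,S) + δ/|P| over P, where Δ(z,S) ≥ 0 and Δ(P,S) = Σ_{p∈P}Δ(p,S) > 0 with Δ(Q,S) > 0. Then for any z ∈ Q, the conditional probability Pr[z | z ∈ Q] under D satisfies Pr[z | z ∈ Q] ≤ Δ(z,S)/Δ(Q,S) + (δ/(1-δ))·(1/|P|)·(Δ(P,S)/Δ(Q,S)). -/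
/-- Upper bound on the conditional probability of a point under the mixed
distribution `D(z) = (1-δ)·Δ(z)/Δ(P) + δ/|P|`, conditioned on `z ∈ Q`. -/
theorem mixed_conditional_upper_bound {α : Type*} [DecidableEq α]
    (P Q : Finset α) (hQP : Q ⊆ P) (hQ : Q.Nonempty)
    (Δ : α → ℝ) (hΔ : ∀ z ∈ P, 0 ≤ Δ z)
    (δ : ℝ) (hδ₀ : 0 < δ) (hδ₁ : δ < 1)
    (hP : 0 < ∑ p ∈ P, Δ p) (hQpos : 0 < ∑ q ∈ Q, Δ q) :
    ∀ z ∈ Q,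
      ((1 - δ) * Δ z / (∑ p ∈ P, Δ p) + δ / (P.card : ℝ)) /
          (∑ q ∈ Q, ((1 - δ) * Δ q / (∑ p ∈ P, Δ p) + δ / (P.card : ℝ)))
        ≤ Δ z / (∑ q ∈ Q, Δ q)
          + (δ / (1 - δ)) * (1 / (P.card : ℝ)) * ((∑ p ∈ P, Δ p) / (∑ q ∈ Q, Δ q)) := by
  intro z hz
  set A := ∑ p ∈ P, Δ p with hA
  set B := ∑ q ∈ Q, Δ q with hB
  have hδ1 : 0 < 1 - δ := by linarith
  have hn : 0 < (P.card : ℝ) := by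
    have : 0 < P.card := Finset.card_pos.mpr ⟨z, hQP hz⟩
    exact_mod_cast this
  have hnum : 0 ≤ (1 - δ) * Δ z / A + δ / (P.card : ℝ) := by
    have h1 : 0 ≤ (1 - δ) * Δ z / A :=
      div_nonneg (mul_nonneg hδ1.le (hΔ z (hQP hz))) hP.le
    have h2 : 0 ≤ δ / (P.card : ℝ) := div_nonneg hδ₀.le hn.le
    linarith
  have hd' : 0 < (1 - δ) * B / A := div_pos (mul_pos hδ1 hQpos) hP
  have hsum : (1 - δ) * B / A ≤ ∑ q ∈ Q, ((1 - δ) * Δ q / A + δ / (P.card : ℝ)) := by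
    rw [Finset.sum_add_distrib, ← Finset.sum_div, ← Finset.mul_sum, ← hB]
    have : 0 ≤ ∑ _q ∈ Q, δ / (P.card : ℝ) :=
      Finset.sum_nonneg fun _ _ => div_nonneg hδ₀.le hn.le
    linarith
  calc ((1 - δ) * Δ z / A + δ / (P.card : ℝ)) /
          (∑ q ∈ Q, ((1 - δ) * Δ q / A + δ / (P.card : ℝ)))
      ≤ ((1 - δ) * Δ z / A + δ / (P.card : ℝ)) / ((1 - δ) * B / A) :=
        div_le_div_of_nonneg_left hnum hd' hsum
    _ = Δ z / B + (δ / (1 - δ)) * (1 / (P.card : ℝ)) * (A / B) := by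
        field_simp
end

section
/- Let P be a finite set, Q ⊆ P nonempty, S a set of centers, and δ ∈ (0,1). With the mixed distribution D(z) = (1-δ)·Δ(z,S)/Δ(P,S) + δ/|P| over P, for any z ∈ Q the conditional probability satisfies Pr[z | z ∈ Q] ≥ Δ(z,S)/Δ(Q,S) − (δ/(1-δ))·(|Q|/|P|)·(Δ(z,S)·Δ(P,S)/Δ(Q,S)²). -/
/-- Lower bound on the conditional probability of a point under the mixed
distribution `D(z) = (1-δ)·Δ(z)/Δ(P) + δ/|P|`, conditioned on `z ∈ Q`. -/
theorem mixed_conditional_lower_bound {α : Type*} [DecidableEq α]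
    (P Q : Finset α) (hQP : Q ⊆ P) (hQ : Q.Nonempty)
    (Δ : α → ℝ) (hΔ : ∀ z ∈ P, 0 ≤ Δ z)
    (δ : ℝ) (hδ₀ : 0 < δ) (hδ₁ : δ < 1)
    (hP : 0 < ∑ p ∈ P, Δ p) (hQpos : 0 < ∑ q ∈ Q, Δ q) :
    ∀ z ∈ Q,
      Δ z / (∑ q ∈ Q, Δ q)
          - (δ / (1 - δ)) * ((Q.card : ℝ) / (P.card : ℝ)) *
              (Δ z * (∑ p ∈ P, Δ p) / (∑ q ∈ Q, Δ q) ^ 2)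
        ≤ ((1 - δ) * Δ z / (∑ p ∈ P, Δ p) + δ / (P.card : ℝ)) /
            (∑ q ∈ Q, ((1 - δ) * Δ q / (∑ p ∈ P, Δ p) + δ / (P.card : ℝ))) := by
  intro z hz
  set SP := ∑ p ∈ P, Δ p with hSPdef
  set SQ := ∑ q ∈ Q, Δ q with hSQdef
  have hn : (0:ℝ) < P.card := by
    exact_mod_cast Finset.card_pos.mpr ⟨z, hQP hz⟩
  have hm : (0:ℝ) < Q.card := by exact_mod_cast Finset.card_pos.mpr hQ
  have h1δ : (0:ℝ) < 1 - δ := by linarith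
  have hA : 0 ≤ Δ z := hΔ z (hQP hz)
  have hden : ∑ q ∈ Q, ((1 - δ) * Δ q / SP + δ / (P.card:ℝ))
      = (1-δ) * SQ / SP + (Q.card:ℝ) * (δ / (P.card:ℝ)) := by
    rw [Finset.sum_add_distrib, Finset.sum_const, nsmul_eq_mul]
    congr 1
    rw [← Finset.sum_div, ← Finset.mul_sum]
  rw [hden]
  set c := δ / (1 - δ) * ((Q.card:ℝ) / (P.card:ℝ)) * SP with hc
  have hc0 : 0 ≤ c := by positivity
  have hSQc : 0 < SQ + c := by linarith
  have step1 : Δ z / SQ - δ / (1-δ) * ((Q.card:ℝ)/(P.card:ℝ)) * (Δ z * SP / SQ^2)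
      ≤ Δ z / (SQ + c) := by
    rw [le_div_iff₀ hSQc]
    have h1 : δ / (1-δ) * ((Q.card:ℝ)/(P.card:ℝ)) * (Δ z * SP / SQ^2)
        = c * Δ z / SQ^2 := by rw [hc]; ring
    rw [h1]
    have expand : (Δ z / SQ - c * Δ z / SQ^2) * (SQ + c)
        = Δ z - Δ z * c^2 / SQ^2 := by
      field_simp
      ring
    rw [expand]
    have : 0 ≤ Δ z * c^2 / SQ^2 := by positivity
    linarith
  have step2 : Δ z / (SQ + c)
      = ((1-δ) * Δ z / SP) / ((1-δ) * SQ / SP + (Q.card:ℝ) * (δ / (P.card:ℝ))) := by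
    have : (1-δ) * SQ / SP + (Q.card:ℝ) * (δ / (P.card:ℝ))
        = (1-δ) / SP * (SQ + c) := by
      rw [hc]; field_simp
    rw [this]
    rw [div_eq_div_iff hSQc.ne' (by positivity)]
    field_simp
  have hdpos : 0 < (1-δ) * SQ / SP + (Q.card:ℝ) * (δ / (P.card:ℝ)) := by positivity
  have step3 : ((1-δ) * Δ z / SP) / ((1-δ) * SQ / SP + (Q.card:ℝ) * (δ / (P.card:ℝ)))
      ≤ ((1-δ) * Δ z / SP + δ / (P.card:ℝ)) /
        ((1-δ) * SQ / SP + (Q.card:ℝ) * (δ / (P.card:ℝ))) := by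
    gcongr
    linarith [div_nonneg hδ₀.le hn.le]
  linarith [step1, step2 ▸ step1]
end

section
/- Let X ⊂ ℝ^d be a finite dataset, S a current set of centers, and C ⊆ X an optimal cluster with centroid μ(C). If a new center z is sampled from C according to the conditional mixed distribution D²_δ (i.e., z chosen with probability proportional to (1-δ)Δ(z,S)/Δ(X,S) + δ/|X| restricted to C), then E[Δ(C, S∪{z})] ≤ 8·Δ(C, μ(C)) + (δ/(1-δ))·(|C|/|X|)·Δ(X,S). -/
open Finset

lemma aux_var {d : ℕ} (C : Finset (EuclideanSpace ℝ (Fin d))) (hC : C.Nonempty)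
    (z : EuclideanSpace ℝ (Fin d)) :
    ∑ x ∈ C, ‖x - z‖ ^ 2
      = (∑ x ∈ C, ‖x - (C.card : ℝ)⁻¹ • ∑ q ∈ C, q‖ ^ 2)
        + (C.card : ℝ) * ‖z - (C.card : ℝ)⁻¹ • ∑ q ∈ C, q‖ ^ 2 := by
  set μ : EuclideanSpace ℝ (Fin d) := (C.card : ℝ)⁻¹ • ∑ q ∈ C, q with hμ
  have hcard : (C.card : ℝ) ≠ 0 := Nat.cast_ne_zero.mpr (card_pos.mpr hC).ne'
  have hsum : ∑ x ∈ C, (x - μ) = 0 := by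
    rw [Finset.sum_sub_distrib, Finset.sum_const, hμ]
    rw [← Nat.cast_smul_eq_nsmul ℝ, smul_smul, mul_inv_cancel₀ hcard, one_smul, sub_self]
  have key : ∀ x : EuclideanSpace ℝ (Fin d),
      ‖x - z‖ ^ 2 = ‖x - μ‖ ^ 2 + 2 * inner ℝ (x - μ) (μ - z) + ‖μ - z‖ ^ 2 := by
    intro x
    rw [show x - z = (x - μ) + (μ - z) by abel]
    exact norm_add_sq_real _ _
  calc ∑ x ∈ C, ‖x - z‖ ^ 2
      = ∑ x ∈ C, (‖x - μ‖ ^ 2 + 2 * inner ℝ (x - μ) (μ - z) + ‖μ - z‖ ^ 2) := by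
        exact Finset.sum_congr rfl fun x _ => key x
    _ = (∑ x ∈ C, ‖x - μ‖ ^ 2) + 2 * inner ℝ (∑ x ∈ C, (x - μ)) (μ - z)
          + (C.card : ℝ) * ‖μ - z‖ ^ 2 := by
        rw [Finset.sum_add_distrib, Finset.sum_add_distrib, Finset.sum_const,
          nsmul_eq_mul, ← Finset.mul_sum, sum_inner]
    _ = (∑ x ∈ C, ‖x - μ‖ ^ 2) + (C.card : ℝ) * ‖z - μ‖ ^ 2 := by
        rw [hsum, inner_zero_left, norm_sub_rev]; ring

open Classical in
lemma aux_core {d : ℕ} (S C : Finset (EuclideanSpace ℝ (Fin d))) (hS : S.Nonempty)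
    (hC : C.Nonempty) :
    ∑ z ∈ C, (S.inf' hS fun c => ‖z - c‖ ^ 2) *
        (∑ x ∈ C, (insert z S).inf' (Finset.insert_nonempty z S) fun c => ‖x - c‖ ^ 2)
      ≤ 8 * (∑ x ∈ C, ‖x - (C.card : ℝ)⁻¹ • ∑ q ∈ C, q‖ ^ 2) *
          (∑ z ∈ C, S.inf' hS fun c => ‖z - c‖ ^ 2) := by
  classical
  set D : EuclideanSpace ℝ (Fin d) → ℝ := fun z => S.inf' hS fun c => ‖z - c‖ ^ 2 with hDdef
  set Φ : ℝ := ∑ x ∈ C, ‖x - (C.card : ℝ)⁻¹ • ∑ q ∈ C, q‖ ^ 2 with hΦdef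
  set A : ℝ := ∑ z ∈ C, D z with hAdef
  have hD0 : ∀ z, 0 ≤ D z := by
    intro z
    obtain ⟨c, hc, hcd⟩ := S.exists_mem_eq_inf' hS fun c => ‖z - c‖ ^ 2
    rw [hDdef]; simp only; rw [hcd]; positivity
  have hA0 : 0 ≤ A := Finset.sum_nonneg fun z _ => hD0 z
  have hΦ0 : 0 ≤ Φ := Finset.sum_nonneg fun x _ => by positivity
  -- cost z as min
  have hcost : ∀ z, (∑ x ∈ C, (insert z S).inf' (Finset.insert_nonempty z S) fun c => ‖x - c‖ ^ 2)
      = ∑ x ∈ C, min (‖x - z‖ ^ 2) (D x) := by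
    intro z
    refine Finset.sum_congr rfl fun x _ => ?_
    rw [Finset.inf'_insert (H := hS)]
  set cost : EuclideanSpace ℝ (Fin d) → ℝ := fun z => ∑ x ∈ C, min (‖x - z‖ ^ 2) (D x)
    with hcostdef
  have hcost0 : ∀ z, 0 ≤ cost z :=
    fun z => Finset.sum_nonneg fun x _ => le_min (by positivity) (hD0 x)
  have hcostW : ∀ z, cost z ≤ ∑ x ∈ C, ‖x - z‖ ^ 2 :=
    fun z => Finset.sum_le_sum fun x _ => min_le_left _ _
  have hcostA : ∀ z, cost z ≤ A :=
    fun z => Finset.sum_le_sum fun x _ => min_le_right _ _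
  -- D z ≤ 2 D x + 2 ‖x - z‖²
  have htri : ∀ z x : EuclideanSpace ℝ (Fin d), D z ≤ 2 * D x + 2 * ‖x - z‖ ^ 2 := by
    intro z x
    obtain ⟨c, hc, hcd⟩ := S.exists_mem_eq_inf' hS fun c => ‖x - c‖ ^ 2
    have h1 : D z ≤ ‖z - c‖ ^ 2 := Finset.inf'_le _ hc
    have h2 : ‖z - c‖ ≤ ‖z - x‖ + ‖x - c‖ := by
      calc ‖z - c‖ = ‖(z - x) + (x - c)‖ := by abel_nf
        _ ≤ ‖z - x‖ + ‖x - c‖ := norm_add_le _ _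
    have h3 : D x = ‖x - c‖ ^ 2 := hcd
    have h4 : ‖z - x‖ = ‖x - z‖ := norm_sub_rev _ _
    nlinarith [norm_nonneg (z - x), norm_nonneg (x - c), norm_nonneg (z - c),
      sq_nonneg (‖z - x‖ - ‖x - c‖)]
  -- card * D z ≤ 2A + 2 W z
  have hcardD : ∀ z, (C.card : ℝ) * D z ≤ 2 * A + 2 * ∑ x ∈ C, ‖x - z‖ ^ 2 := by
    intro z
    have : ∑ _x ∈ C, D z ≤ ∑ x ∈ C, (2 * D x + 2 * ‖x - z‖ ^ 2) :=
      Finset.sum_le_sum fun x _ => htri z x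
    simpa [Finset.sum_add_distrib, ← Finset.mul_sum, hAdef, Finset.sum_const,
      nsmul_eq_mul] using this
  -- per-z bound
  have hper : ∀ z, (C.card : ℝ) * (D z * cost z) ≤ 4 * A * ∑ x ∈ C, ‖x - z‖ ^ 2 := by
    intro z
    nlinarith [hcardD z, hcost0 z, hcostW z, hcostA z, hA0, hD0 z,
      Finset.sum_nonneg (fun x (_ : x ∈ C) => by positivity : ∀ x ∈ C, (0:ℝ) ≤ ‖x - z‖ ^ 2)]
  -- sum of W z
  have hW : ∑ z ∈ C, ∑ x ∈ C, ‖x - z‖ ^ 2 = 2 * (C.card : ℝ) * Φ := by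
    have h1 : ∀ z ∈ C, ∑ x ∈ C, ‖x - z‖ ^ 2
        = Φ + (C.card : ℝ) * ‖z - (C.card : ℝ)⁻¹ • ∑ q ∈ C, q‖ ^ 2 :=
      fun z _ => aux_var C hC z
    rw [Finset.sum_congr rfl h1, Finset.sum_add_distrib, Finset.sum_const, nsmul_eq_mul,
      ← Finset.mul_sum, ← hΦdef]
    ring
  have hcardpos : (0:ℝ) < (C.card : ℝ) := by
    exact_mod_cast Finset.card_pos.mpr hC
  have hmain : (C.card : ℝ) * ∑ z ∈ C, D z * cost z ≤ (C.card : ℝ) * (8 * Φ * A) := by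
    calc (C.card : ℝ) * ∑ z ∈ C, D z * cost z
        = ∑ z ∈ C, (C.card : ℝ) * (D z * cost z) := by rw [Finset.mul_sum]
      _ ≤ ∑ z ∈ C, 4 * A * ∑ x ∈ C, ‖x - z‖ ^ 2 := Finset.sum_le_sum fun z _ => hper z
      _ = 4 * A * (2 * (C.card : ℝ) * Φ) := by rw [← Finset.mul_sum, hW]
      _ = (C.card : ℝ) * (8 * Φ * A) := by ring
  have := le_of_mul_le_mul_left hmain hcardpos
  calc ∑ z ∈ C, D z * (∑ x ∈ C, (insert z S).inf' (Finset.insert_nonempty z S) fun c => ‖x - c‖ ^ 2)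
      = ∑ z ∈ C, D z * cost z := by
        refine Finset.sum_congr rfl fun z _ => ?_
        rw [hcost z]
    _ ≤ 8 * Φ * A := this

lemma aux_assembly {ι : Type*} (C : Finset ι) (Dz cost : ι → ℝ) (Φ T n δ : ℝ)
    (hD : ∀ z ∈ C, 0 ≤ Dz z)
    (hcost0 : ∀ z ∈ C, 0 ≤ cost z)
    (hcostA : ∀ z ∈ C, cost z ≤ ∑ x ∈ C, Dz x)
    (hcore : ∑ z ∈ C, Dz z * cost z ≤ 8 * Φ * ∑ z ∈ C, Dz z)
    (hΦ : 0 ≤ Φ) (hAT : ∑ z ∈ C, Dz z ≤ T) (hn : 0 < n)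
    (hδ₀ : 0 < δ) (hδ₁ : δ < 1) :
    ∑ z ∈ C, (((1 - δ) * Dz z / T + δ / n) / (∑ q ∈ C, ((1 - δ) * Dz q / T + δ / n))) * cost z
      ≤ 8 * Φ + (δ / (1 - δ)) * ((C.card : ℝ) / n) * T := by
  set A : ℝ := ∑ z ∈ C, Dz z with hAdef
  have hA0 : 0 ≤ A := Finset.sum_nonneg hD
  have hδ' : 0 < 1 - δ := by linarith
  by_cases hA : A = 0
  · -- all costs are zero
    have hc : ∀ z ∈ C, cost z = 0 := fun z hz =>
      le_antisymm (by rw [← hA]; exact hcostA z hz) (hcost0 z hz)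
    have hT0 : 0 ≤ T := hA ▸ hAT
    have : ∑ z ∈ C, (((1 - δ) * Dz z / T + δ / n) /
        (∑ q ∈ C, ((1 - δ) * Dz q / T + δ / n))) * cost z = 0 :=
      Finset.sum_eq_zero fun z hz => by rw [hc z hz, mul_zero]
    rw [this]
    have : (0:ℝ) ≤ (δ / (1 - δ)) * ((C.card : ℝ) / n) * T := by positivity
    linarith
  · have hApos : 0 < A := lt_of_le_of_ne hA0 (Ne.symm hA)
    have hTpos : 0 < T := lt_of_lt_of_le hApos hAT
    set w : ι → ℝ := fun z => (1 - δ) * Dz z / T + δ / n with hwdef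
    have hw0 : ∀ z ∈ C, 0 ≤ w z := fun z hz => by
      have := hD z hz; positivity
    set B : ℝ := (1 - δ) * A / T with hBdef
    have hBpos : 0 < B := by positivity
    have hWB : B ≤ ∑ q ∈ C, w q := by
      have : ∑ q ∈ C, w q = (1 - δ) * A / T + (C.card : ℝ) * (δ / n) := by
        rw [hwdef]
        simp only [Finset.sum_add_distrib, Finset.sum_const, nsmul_eq_mul, hAdef]
        rw [← Finset.sum_div, ← Finset.mul_sum]
      rw [this]
      have : (0:ℝ) ≤ (C.card : ℝ) * (δ / n) := by positivity
      linarith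
    have hN0 : 0 ≤ ∑ z ∈ C, w z * cost z :=
      Finset.sum_nonneg fun z hz => mul_nonneg (hw0 z hz) (hcost0 z hz)
    have hstep1 : ∑ z ∈ C, (w z / ∑ q ∈ C, w q) * cost z
        = (∑ z ∈ C, w z * cost z) / (∑ q ∈ C, w q) := by
      rw [Finset.sum_div]
      exact Finset.sum_congr rfl fun z _ => by ring
    rw [hstep1]
    have hstep2 : (∑ z ∈ C, w z * cost z) / (∑ q ∈ C, w q)
        ≤ (∑ z ∈ C, w z * cost z) / B :=
      div_le_div_of_nonneg_left hN0 hBpos hWB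
    refine le_trans hstep2 ?_
    rw [div_le_iff₀ hBpos]
    have hexpand : ∑ z ∈ C, w z * cost z
        = ((1 - δ) / T) * (∑ z ∈ C, Dz z * cost z) + (δ / n) * ∑ z ∈ C, cost z := by
      rw [Finset.mul_sum, Finset.mul_sum, ← Finset.sum_add_distrib]
      exact Finset.sum_congr rfl fun z _ => by rw [hwdef]; ring
    have hcostsum : ∑ z ∈ C, cost z ≤ (C.card : ℝ) * A := by
      calc ∑ z ∈ C, cost z ≤ ∑ _z ∈ C, A := Finset.sum_le_sum hcostA
        _ = (C.card : ℝ) * A := by rw [Finset.sum_const, nsmul_eq_mul]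
    have h1 : ((1 - δ) / T) * (∑ z ∈ C, Dz z * cost z) ≤ ((1 - δ) / T) * (8 * Φ * A) :=
      mul_le_mul_of_nonneg_left hcore (by positivity)
    have h2 : (δ / n) * ∑ z ∈ C, cost z ≤ (δ / n) * ((C.card : ℝ) * A) :=
      mul_le_mul_of_nonneg_left hcostsum (by positivity)
    have heq : (8 * Φ + (δ / (1 - δ)) * ((C.card : ℝ) / n) * T) * B
        = ((1 - δ) / T) * (8 * Φ * A) + (δ / n) * ((C.card : ℝ) * A) := by
      rw [hBdef]
      field_simp
    rw [heq, hexpand]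
    linarith

open Classical in

/-- Sampling a new center `z` from a cluster `C ⊆ X` according to the
`δ`-perturbed `D²` distribution (conditioned on `z ∈ C`) gives
`E[Δ(C, S∪{z})] ≤ 8·Δ(C, μ(C)) + (δ/(1-δ))·(|C|/|X|)·Δ(X,S)`. -/
theorem delta_D2_cluster_bound {d : ℕ}
    (X S C : Finset (EuclideanSpace ℝ (Fin d)))
    (hS : S.Nonempty) (hC : C.Nonempty) (hCX : C ⊆ X)
    (δ : ℝ) (hδ₀ : 0 < δ) (hδ₁ : δ < 1) :
    (∑ z ∈ C,
        (((1 - δ) * (S.inf' hS fun c => ‖z - c‖ ^ 2) /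
              (∑ y ∈ X, S.inf' hS fun c => ‖y - c‖ ^ 2) + δ / (X.card : ℝ)) /
          (∑ q ∈ C,
            ((1 - δ) * (S.inf' hS fun c => ‖q - c‖ ^ 2) /
                (∑ y ∈ X, S.inf' hS fun c => ‖y - c‖ ^ 2) + δ / (X.card : ℝ)))) *
        (∑ x ∈ C, (insert z S).inf' (Finset.insert_nonempty z S) fun c => ‖x - c‖ ^ 2))
      ≤ 8 * (∑ x ∈ C, ‖x - (C.card : ℝ)⁻¹ • ∑ q ∈ C, q‖ ^ 2)
        + (δ / (1 - δ)) * ((C.card : ℝ) / (X.card : ℝ)) *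
            (∑ y ∈ X, S.inf' hS fun c => ‖y - c‖ ^ 2) := by
  have hD0 : ∀ z : EuclideanSpace ℝ (Fin d), 0 ≤ S.inf' hS fun c => ‖z - c‖ ^ 2 := by
    intro z
    obtain ⟨c, hc, hcd⟩ := S.exists_mem_eq_inf' hS fun c => ‖z - c‖ ^ 2
    rw [hcd]; positivity
  have hI0 : ∀ z x : EuclideanSpace ℝ (Fin d),
      0 ≤ (insert z S).inf' (Finset.insert_nonempty z S) fun c => ‖x - c‖ ^ 2 := by
    intro z x
    obtain ⟨c, hc, hcd⟩ :=
      (insert z S).exists_mem_eq_inf' (Finset.insert_nonempty z S) fun c => ‖x - c‖ ^ 2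
    rw [hcd]; positivity
  refine aux_assembly C (fun z => S.inf' hS fun c => ‖z - c‖ ^ 2)
    (fun z => ∑ x ∈ C, (insert z S).inf' (Finset.insert_nonempty z S) fun c => ‖x - c‖ ^ 2)
    (∑ x ∈ C, ‖x - (C.card : ℝ)⁻¹ • ∑ q ∈ C, q‖ ^ 2)
    (∑ y ∈ X, S.inf' hS fun c => ‖y - c‖ ^ 2) (X.card : ℝ) δ
    (fun z _ => hD0 z)
    (fun z _ => Finset.sum_nonneg fun x _ => hI0 z x)
    (fun z _ => Finset.sum_le_sum fun x _ => ?_)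
    (aux_core S C hS hC)
    (Finset.sum_nonneg fun x _ => by positivity)
    (Finset.sum_le_sum_of_subset_of_nonneg hCX fun y _ _ => hD0 y)
    ?_ hδ₀ hδ₁
  · rw [Finset.inf'_insert (H := hS)]
    exact inf_le_right
  · have : X.Nonempty := ⟨hC.choose, hCX hC.choose_spec⟩
    exact_mod_cast Finset.card_pos.mpr this
end

section
/- Let X ⊂ ℝ^d, and suppose the first center c₁ is chosen uniformly at random from X and subsequent centers via δ-perturbed D²-sampling. Then at any step t, the expected total cost of points in covered optimal clusters satisfies E[Δ^t(H_t)] ≤ 8·Δ_k(X) + (2δ/(1-δ))·Δ₁(X). -/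
/-- Squared distance from `x` to the nearest center in the list `S`. -/
noncomputable def ptCost {d : ℕ} (x : EuclideanSpace ℝ (Fin d))
    (S : List (EuclideanSpace ℝ (Fin d))) : ℝ :=
  sInf ((fun c => ‖x - c‖ ^ 2) '' {c | c ∈ S})

/-- Total clustering cost `Δ(X,S)`. -/
noncomputable def setCost {d : ℕ} (X : Finset (EuclideanSpace ℝ (Fin d)))
    (S : List (EuclideanSpace ℝ (Fin d))) : ℝ :=
  ∑ x ∈ X, ptCost x S

/-- `δ`-perturbed `D²` sampling weight. -/
noncomputable def stepWeight {d : ℕ} (X : Finset (EuclideanSpace ℝ (Fin d))) (δ : ℝ)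
    (S : List (EuclideanSpace ℝ (Fin d))) (x : EuclideanSpace ℝ (Fin d)) : ℝ :=
  (1 - δ) * ptCost x S / setCost X S + δ / (X.card : ℝ)

open Classical in
/-- Cost `Δ(H,S)` of the points lying in *covered* optimal clusters: `f` maps
each point to its optimal center, and a point `x` is covered when some chosen
center lies in the same optimal cluster as `x`. -/
noncomputable def coveredCost {d : ℕ} (X : Finset (EuclideanSpace ℝ (Fin d)))
    (f : EuclideanSpace ℝ (Fin d) → EuclideanSpace ℝ (Fin d))
    (S : List (EuclideanSpace ℝ (Fin d))) : ℝ :=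
  ∑ x ∈ X, if ∃ c ∈ S, f c = f x then ptCost x S else 0

/-- Expected covered-cluster cost after `t` further `δ`-perturbed `D²`
sampling steps starting from the current list of centers. -/
noncomputable def expCoveredCost {d : ℕ} (X : Finset (EuclideanSpace ℝ (Fin d)))
    (f : EuclideanSpace ℝ (Fin d) → EuclideanSpace ℝ (Fin d)) (δ : ℝ) :
    ℕ → List (EuclideanSpace ℝ (Fin d)) → ℝ
  | 0, S => coveredCost X f S
  | t + 1, S => ∑ x ∈ X, stepWeight X δ S x * expCoveredCost X f δ t (x :: S)


open Finset

variable {d : ℕ}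

local notation "E" => EuclideanSpace ℝ (Fin d)

lemma ptCost_nonneg (x : E) (S : List E) : 0 ≤ ptCost x S := by
  apply Real.sInf_nonneg
  rintro r ⟨c, -, rfl⟩
  positivity

lemma ptCost_bddBelow (x : E) (S : List E) :
    BddBelow ((fun c => ‖x - c‖ ^ 2) '' {c | c ∈ S}) := by
  refine ⟨0, ?_⟩
  rintro r ⟨c, -, rfl⟩
  positivity

lemma ptCost_le_of_mem {x c : E} {S : List E} (h : c ∈ S) : ptCost x S ≤ ‖x - c‖ ^ 2 :=
  csInf_le (ptCost_bddBelow x S) ⟨c, h, rfl⟩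

lemma ptCost_cons_le {x y : E} {S : List E} (hS : S ≠ []) :
    ptCost x (y :: S) ≤ ptCost x S := by
  apply csInf_le_csInf (ptCost_bddBelow x _)
  · rcases List.exists_mem_of_ne_nil S hS with ⟨c, hc⟩
    exact ⟨‖x - c‖ ^ 2, c, hc, rfl⟩
  · rintro r ⟨c, hc, rfl⟩
    exact ⟨c, List.mem_cons_of_mem _ hc, rfl⟩

lemma ptCost_attained {x : E} {S : List E} (hS : S ≠ []) :
    ∃ c ∈ S, ptCost x S = ‖x - c‖ ^ 2 := by
  rcases List.exists_mem_of_ne_nil S hS with ⟨c₀, hc₀⟩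
  have hne : ((fun c => ‖x - c‖ ^ 2) '' {c | c ∈ S}).Nonempty := ⟨_, c₀, hc₀, rfl⟩
  have hfin : ((fun c => ‖x - c‖ ^ 2) '' {c | c ∈ S}).Finite :=
    (S.finite_toSet).image _
  obtain ⟨c, hc, hval⟩ := hne.csInf_mem hfin
  exact ⟨c, hc, hval.symm⟩

lemma sq_norm_sub_le (x z c : E) : ‖x - c‖ ^ 2 ≤ 2 * ‖x - z‖ ^ 2 + 2 * ‖z - c‖ ^ 2 := by
  have h : ‖x - c‖ ≤ ‖x - z‖ + ‖z - c‖ := norm_sub_le_norm_sub_add_norm_sub _ _ _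
  nlinarith [norm_nonneg (x - c), norm_nonneg (x - z), norm_nonneg (z - c),
    sq_nonneg (‖x - z‖ - ‖z - c‖)]

lemma ptCost_triangle (x z : E) (S : List E) :
    ptCost x S ≤ 2 * ptCost z S + 2 * ‖x - z‖ ^ 2 := by
  rcases eq_or_ne S [] with rfl | hS
  · have : ptCost x [] = 0 := by simp [ptCost]
    rw [this]
    have := ptCost_nonneg z ([] : List E)
    positivity
  · obtain ⟨c, hc, hval⟩ := ptCost_attained (x := z) hS
    calc ptCost x S ≤ ‖x - c‖ ^ 2 := ptCost_le_of_mem hc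
    _ ≤ 2 * ‖x - z‖ ^ 2 + 2 * ‖z - c‖ ^ 2 := sq_norm_sub_le x z c
    _ = 2 * ptCost z S + 2 * ‖x - z‖ ^ 2 := by rw [hval]; ring

lemma sum_sum_dist_sq_le (C : Finset E) (c : E) :
    ∑ x ∈ C, ∑ y ∈ C, ‖x - y‖ ^ 2 ≤ 2 * C.card * ∑ y ∈ C, ‖y - c‖ ^ 2 := by
  have expand : ∀ x y : E, ‖x - y‖ ^ 2
      = ‖x - c‖ ^ 2 + ‖y - c‖ ^ 2 - 2 * (inner ℝ (x - c) (y - c) : ℝ) := by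
    intro x y
    have h : x - y = (x - c) - (y - c) := by abel
    rw [h, norm_sub_sq_real]; ring
  have hinner : ∑ x ∈ C, ∑ y ∈ C, (inner ℝ (x - c) (y - c) : ℝ)
      = (inner ℝ (∑ x ∈ C, (x - c)) (∑ y ∈ C, (y - c)) : ℝ) := by
    rw [sum_inner]
    exact Finset.sum_congr rfl fun x _ => (inner_sum _ _ _).symm
  have hnn : (0:ℝ) ≤ inner ℝ (∑ x ∈ C, (x - c)) (∑ y ∈ C, (y - c)) := real_inner_self_nonneg
  have h1 : ∑ x ∈ C, ∑ y ∈ C, ‖x - y‖ ^ 2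
      = (∑ x ∈ C, ∑ y ∈ C, (‖x - c‖ ^ 2 + ‖y - c‖ ^ 2))
        - 2 * ∑ x ∈ C, ∑ y ∈ C, (inner ℝ (x - c) (y - c) : ℝ) := by
    rw [Finset.mul_sum]
    rw [← Finset.sum_sub_distrib]
    refine Finset.sum_congr rfl fun x _ => ?_
    rw [Finset.mul_sum, ← Finset.sum_sub_distrib]
    exact Finset.sum_congr rfl fun y _ => expand x y
  have h2 : ∑ x ∈ C, ∑ y ∈ C, (‖x - c‖ ^ 2 + ‖y - c‖ ^ 2)
      = 2 * C.card * ∑ y ∈ C, ‖y - c‖ ^ 2 := by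
    simp only [Finset.sum_add_distrib, Finset.sum_const, nsmul_eq_mul, ← Finset.sum_mul, ← Finset.mul_sum]
    ring
  rw [h1, h2, hinner]
  linarith

/-- Core `D²`-sampling lemma (Arthur–Vassilvitskii style, perturbed weights). -/
lemma av_lemma (C : Finset E) (cstar : E) (w p : E → ℝ) (a : ℝ)
    (ha : 0 ≤ a)
    (hw : ∀ x ∈ C, 0 ≤ w x) (hp : ∀ x ∈ C, 0 ≤ p x)
    (htri : ∀ x ∈ C, ∀ z ∈ C, w x ≤ 2 * w z + 2 * a * ‖x - z‖ ^ 2)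
    (hap : a * ∑ y ∈ C, p y ≤ ∑ y ∈ C, w y) :
    ∑ x ∈ C, w x * ∑ y ∈ C, min (p y) (‖y - x‖ ^ 2)
      ≤ 8 * (∑ y ∈ C, ‖y - cstar‖ ^ 2) * ∑ x ∈ C, w x := by
  rcases C.eq_empty_or_nonempty with rfl | hC
  · simp
  set n : ℝ := (C.card : ℝ) with hn
  have hn0 : 0 < n := by
    have h : 0 < C.card := Finset.card_pos.mpr hC
    rw [hn]
    exact_mod_cast h
  set Q : ℝ := ∑ y ∈ C, ‖y - cstar‖ ^ 2 with hQdef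
  set W : ℝ := ∑ x ∈ C, w x with hWdef
  set P : ℝ := ∑ y ∈ C, p y with hPdef
  set T : ℝ := ∑ x ∈ C, ∑ y ∈ C, ‖x - y‖ ^ 2 with hTdef
  have hQ : 0 ≤ Q := Finset.sum_nonneg fun y _ => by positivity
  have hW : 0 ≤ W := Finset.sum_nonneg hw
  have hP : 0 ≤ P := Finset.sum_nonneg hp
  have hTQ : T ≤ 2 * n * Q := sum_sum_dist_sq_le C cstar
  -- swapped-orientation double distance sum equals T
  have hTsym : ∑ x ∈ C, ∑ y ∈ C, ‖y - x‖ ^ 2 = T := by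
    rw [hTdef]
    exact Finset.sum_comm
  have hmin_nonneg : ∀ x ∈ C, ∀ y ∈ C, 0 ≤ min (p y) (‖y - x‖ ^ 2) := fun x _ y hy =>
    le_min (hp y hy) (by positivity)
  -- key: n * LHS ≤ 2*W*T + 2*a*T*P
  have key : n * ∑ x ∈ C, w x * ∑ y ∈ C, min (p y) (‖y - x‖ ^ 2)
      ≤ 2 * W * T + 2 * a * T * P := by
    rw [Finset.mul_sum]
    have hb : ∀ x ∈ C, n * (w x * ∑ y ∈ C, min (p y) (‖y - x‖ ^ 2))
        ≤ 2 * W * (∑ y ∈ C, ‖y - x‖ ^ 2) + 2 * a * (∑ z ∈ C, ‖x - z‖ ^ 2) * P := by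
      intro x hx
      have hM : 0 ≤ ∑ y ∈ C, min (p y) (‖y - x‖ ^ 2) :=
        Finset.sum_nonneg fun y hy => hmin_nonneg x hx y hy
      have hB : n * w x ≤ 2 * W + 2 * a * ∑ z ∈ C, ‖x - z‖ ^ 2 := by
        have hless : ∑ _z ∈ C, w x ≤ ∑ z ∈ C, (2 * w z + 2 * a * ‖x - z‖ ^ 2) :=
          Finset.sum_le_sum fun z hz => htri x hx z hz
        have e1 : ∑ _z ∈ C, w x = n * w x := by
          rw [Finset.sum_const, nsmul_eq_mul, hn]
        have e2 : ∑ z ∈ C, (2 * w z + 2 * a * ‖x - z‖ ^ 2)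
            = 2 * W + 2 * a * ∑ z ∈ C, ‖x - z‖ ^ 2 := by
          rw [Finset.sum_add_distrib, ← Finset.mul_sum, ← Finset.mul_sum, hWdef]
        rw [e1, e2] at hless
        exact hless
      have h1 : n * (w x * ∑ y ∈ C, min (p y) (‖y - x‖ ^ 2))
          ≤ (2 * W + 2 * a * ∑ z ∈ C, ‖x - z‖ ^ 2) * ∑ y ∈ C, min (p y) (‖y - x‖ ^ 2) := by
        rw [← mul_assoc]
        exact mul_le_mul_of_nonneg_right hB hM
      have h2 : (2 * W + 2 * a * ∑ z ∈ C, ‖x - z‖ ^ 2) * ∑ y ∈ C, min (p y) (‖y - x‖ ^ 2)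
          ≤ 2 * W * (∑ y ∈ C, ‖y - x‖ ^ 2) + 2 * a * (∑ z ∈ C, ‖x - z‖ ^ 2) * P := by
        have hWd : 0 ≤ ∑ z ∈ C, ‖x - z‖ ^ 2 := Finset.sum_nonneg fun z _ => by positivity
        rw [add_mul]
        refine add_le_add ?_ ?_
        · exact mul_le_mul_of_nonneg_left
            (Finset.sum_le_sum fun y hy => min_le_right _ _) (by linarith : (0:ℝ) ≤ 2 * W)
        · refine mul_le_mul_of_nonneg_left ?_
            (by positivity : (0:ℝ) ≤ 2 * a * ∑ z ∈ C, ‖x - z‖ ^ 2)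
          rw [hPdef]
          exact Finset.sum_le_sum fun y hy => min_le_left _ _
      exact h1.trans h2
    calc ∑ x ∈ C, n * (w x * ∑ y ∈ C, min (p y) (‖y - x‖ ^ 2))
        ≤ ∑ x ∈ C, (2 * W * (∑ y ∈ C, ‖y - x‖ ^ 2) + 2 * a * (∑ z ∈ C, ‖x - z‖ ^ 2) * P) :=
          Finset.sum_le_sum hb
      _ = 2 * W * T + 2 * a * T * P := by
          rw [Finset.sum_add_distrib, ← Finset.mul_sum, hTsym, ← Finset.sum_mul,
            ← Finset.mul_sum, hTdef]
  have hfinal : n * ∑ x ∈ C, w x * ∑ y ∈ C, min (p y) (‖y - x‖ ^ 2) ≤ n * (8 * Q * W) := by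
    have haP : 0 ≤ a * P := mul_nonneg ha hP
    have hT0 : 0 ≤ T := Finset.sum_nonneg fun x _ => Finset.sum_nonneg fun y _ => by positivity
    calc n * ∑ x ∈ C, w x * ∑ y ∈ C, min (p y) (‖y - x‖ ^ 2)
        ≤ 2 * W * T + 2 * a * T * P := key
      _ = 2 * T * (W + a * P) := by ring
      _ ≤ 2 * (2 * n * Q) * (W + a * P) := by
          apply mul_le_mul_of_nonneg_right _ (by linarith)
          linarith
      _ ≤ 2 * (2 * n * Q) * (W + W) := by
          apply mul_le_mul_of_nonneg_left _ (by positivity)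
          linarith
      _ = n * (8 * Q * W) := by ring
  exact le_of_mul_le_mul_left hfinal hn0

open Classical in
/-- Cost contribution of the *newly covered* cluster when `x` is added. -/
noncomputable def newCost (X : Finset E) (f : E → E) (S : List E) (x : E) : ℝ :=
  ∑ y ∈ X, if f y = f x ∧ ¬∃ c ∈ S, f c = f y then min (ptCost y S) (‖y - x‖ ^ 2) else 0

open Classical in
/-- Optimal cost of the newly covered cluster when `x` is added. -/
noncomputable def newOpt (X : Finset E) (f : E → E) (S : List E) (x : E) : ℝ :=
  ∑ y ∈ X, if f y = f x ∧ ¬∃ c ∈ S, f c = f y then ‖y - f y‖ ^ 2 else 0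

open Classical in
/-- Optimal cost of the uncovered clusters. -/
noncomputable def uncovOpt (X : Finset E) (f : E → E) (S : List E) : ℝ :=
  ∑ x ∈ X, if ∃ c ∈ S, f c = f x then 0 else ‖x - f x‖ ^ 2

lemma coveredCost_nonneg (X : Finset E) (f : E → E) (S : List E) :
    0 ≤ coveredCost X f S := by
  classical
  refine Finset.sum_nonneg fun x _ => ?_
  split_ifs
  · exact ptCost_nonneg _ _
  · exact le_refl 0

lemma uncovOpt_nonneg (X : Finset E) (f : E → E) (S : List E) :
    0 ≤ uncovOpt X f S := by
  classical
  refine Finset.sum_nonneg fun x _ => ?_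
  split_ifs
  · exact le_refl 0
  · positivity

lemma covered_cons_le (X : Finset E) (f : E → E) {S : List E} (hS : S ≠ []) (x : E) :
    coveredCost X f (x :: S) ≤ coveredCost X f S + newCost X f S x := by
  classical
  unfold coveredCost newCost
  rw [← Finset.sum_add_distrib]
  refine Finset.sum_le_sum fun y hy => ?_
  by_cases h1 : ∃ c ∈ S, f c = f y
  · have h2 : ∃ c ∈ x :: S, f c = f y := by
      obtain ⟨c, hc, hfc⟩ := h1
      exact ⟨c, List.mem_cons_of_mem _ hc, hfc⟩
    rw [if_pos h2, if_pos h1, if_neg (fun h => h.2 h1), add_zero]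
    exact ptCost_cons_le hS
  · by_cases h2 : f y = f x
    · have hcons : ∃ c ∈ x :: S, f c = f y := ⟨x, List.mem_cons_self, h2.symm⟩
      rw [if_pos hcons, if_neg h1, if_pos ⟨h2, h1⟩, zero_add]
      exact le_min (ptCost_cons_le hS) (ptCost_le_of_mem (List.mem_cons_self))
    · have hcons : ¬∃ c ∈ x :: S, f c = f y := by
        rintro ⟨c, hc, hfc⟩
        rcases List.mem_cons.mp hc with rfl | hc'
        · exact h2 hfc.symm
        · exact h1 ⟨c, hc', hfc⟩
      rw [if_neg hcons, if_neg h1, if_neg (fun h => h2 h.1), add_zero]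

lemma uncov_cons (X : Finset E) (f : E → E) (S : List E) (x : E) :
    uncovOpt X f (x :: S) = uncovOpt X f S - newOpt X f S x := by
  classical
  unfold uncovOpt newOpt
  rw [← Finset.sum_sub_distrib]
  refine Finset.sum_congr rfl fun y hy => ?_
  by_cases h1 : ∃ c ∈ S, f c = f y
  · have h2 : ∃ c ∈ x :: S, f c = f y := by
      obtain ⟨c, hc, hfc⟩ := h1
      exact ⟨c, List.mem_cons_of_mem _ hc, hfc⟩
    rw [if_pos h2, if_pos h1, if_neg (fun h => h.2 h1), sub_zero]
  · by_cases h2 : f y = f x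
    · have hcons : ∃ c ∈ x :: S, f c = f y := ⟨x, List.mem_cons_self, h2.symm⟩
      rw [if_pos hcons, if_neg h1, if_pos ⟨h2, h1⟩, sub_self]
    · have hcons : ¬∃ c ∈ x :: S, f c = f y := by
        rintro ⟨c, hc, hfc⟩
        rcases List.mem_cons.mp hc with rfl | hc'
        · exact h2 hfc.symm
        · exact h1 ⟨c, hc', hfc⟩
      rw [if_neg hcons, if_neg h1, if_neg (fun h => h2 h.1), sub_zero]

lemma stepWeight_nonneg (X : Finset E) {δ : ℝ} (S : List E) (x : E)
    (hδ0 : 0 ≤ δ) (hδ1 : δ ≤ 1) : 0 ≤ stepWeight X δ S x := by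
  unfold stepWeight
  have h1 : 0 ≤ ptCost x S := ptCost_nonneg x S
  have h2 : 0 ≤ setCost X S := Finset.sum_nonneg fun y _ => ptCost_nonneg y S
  have h3 : (0:ℝ) ≤ (X.card : ℝ) := Nat.cast_nonneg _
  have := div_nonneg (mul_nonneg (by linarith : (0:ℝ) ≤ 1 - δ) h1) h2
  have := div_nonneg hδ0 h3
  linarith

lemma stepWeight_sum_le_one (X : Finset E) {δ : ℝ} (S : List E)
    (hX : X.Nonempty) (hδ0 : 0 ≤ δ) (hδ1 : δ ≤ 1) :
    ∑ x ∈ X, stepWeight X δ S x ≤ 1 := by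
  unfold stepWeight
  rw [Finset.sum_add_distrib, Finset.sum_const, nsmul_eq_mul]
  have hcard : (0:ℝ) < (X.card : ℝ) := by
    have := Finset.card_pos.mpr hX
    exact_mod_cast this
  have h2 : (X.card : ℝ) * (δ / (X.card : ℝ)) = δ := by
    field_simp
  have h1 : ∑ x ∈ X, (1 - δ) * ptCost x S / setCost X S ≤ 1 - δ := by
    rw [← Finset.sum_div, ← Finset.mul_sum]
    have hset : ∑ x ∈ X, ptCost x S = setCost X S := rfl
    rw [hset]
    rcases eq_or_ne (setCost X S) 0 with h | h
    · rw [h, mul_zero, zero_div]; linarith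
    · rw [mul_div_assoc, div_self h, mul_one]
  linarith

lemma key_step (X : Finset E) (f : E → E) {δ : ℝ} (S : List E)
    (hδ0 : 0 ≤ δ) (hδ1 : δ ≤ 1) :
    ∑ x ∈ X, stepWeight X δ S x * newCost X f S x
      ≤ 8 * ∑ x ∈ X, stepWeight X δ S x * newOpt X f S x := by
  classical
  set w : E → ℝ := stepWeight X δ S with hwdef
  set p : E → ℝ := fun y => ptCost y S with hpdef
  set a : ℝ := (1 - δ) / setCost X S with hadef
  have hsc : 0 ≤ setCost X S := Finset.sum_nonneg fun y _ => ptCost_nonneg y S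
  have ha : 0 ≤ a := div_nonneg (by linarith) hsc
  have hb : 0 ≤ δ / (X.card : ℝ) := div_nonneg hδ0 (Nat.cast_nonneg _)
  have hwa : ∀ x, w x = a * p x + δ / (X.card : ℝ) := by
    intro x
    rw [hwdef, hadef, hpdef]
    unfold stepWeight
    rw [div_mul_eq_mul_div]
  have hw0 : ∀ x, 0 ≤ w x := fun x => stepWeight_nonneg X S x hδ0 hδ1
  have hp0 : ∀ x, 0 ≤ p x := fun x => ptCost_nonneg x S
  set U : Finset E := X.filter (fun x => ¬∃ c ∈ S, f c = f x) with hUdef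
  -- vanish on covered points
  have hMzero : ∀ x ∈ X, (∃ c ∈ S, f c = f x) → newCost X f S x = 0 := by
    intro x hx hcov
    refine Finset.sum_eq_zero fun y hy => ?_
    refine if_neg ?_
    rintro ⟨hfy, hnc⟩
    obtain ⟨c, hc, hfc⟩ := hcov
    exact hnc ⟨c, hc, hfc.trans hfy.symm⟩
  have hNzero : ∀ x ∈ X, (∃ c ∈ S, f c = f x) → newOpt X f S x = 0 := by
    intro x hx hcov
    refine Finset.sum_eq_zero fun y hy => ?_
    refine if_neg ?_
    rintro ⟨hfy, hnc⟩
    obtain ⟨c, hc, hfc⟩ := hcov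
    exact hnc ⟨c, hc, hfc.trans hfy.symm⟩
  have hresM : ∑ x ∈ U, w x * newCost X f S x = ∑ x ∈ X, w x * newCost X f S x := by
    refine Finset.sum_subset (Finset.filter_subset _ _) fun x hx hnx => ?_
    have hcov : ∃ c ∈ S, f c = f x := by
      by_contra h
      exact hnx (Finset.mem_filter.mpr ⟨hx, h⟩)
    rw [hMzero x hx hcov, mul_zero]
  have hresN : ∑ x ∈ U, w x * newOpt X f S x = ∑ x ∈ X, w x * newOpt X f S x := by
    refine Finset.sum_subset (Finset.filter_subset _ _) fun x hx hnx => ?_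
    have hcov : ∃ c ∈ S, f c = f x := by
      by_contra h
      exact hnx (Finset.mem_filter.mpr ⟨hx, h⟩)
    rw [hNzero x hx hcov, mul_zero]
  have hfibM := Finset.sum_fiberwise_of_maps_to
    (fun x (hx : x ∈ U) => Finset.mem_image_of_mem f hx)
    (fun x => w x * newCost X f S x)
  have hfibN := Finset.sum_fiberwise_of_maps_to
    (fun x (hx : x ∈ U) => Finset.mem_image_of_mem f hx)
    (fun x => w x * newOpt X f S x)
  rw [← hresM, ← hresN, ← hfibM, ← hfibN, Finset.mul_sum]
  refine Finset.sum_le_sum fun v hv => ?_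
  -- per-fiber
  set C : Finset E := U.filter (fun x => f x = v) with hCdef
  have hCfacts : ∀ x ∈ C, x ∈ X ∧ f x = v ∧ ¬∃ c ∈ S, f c = f x := by
    intro x hx
    rw [hCdef, Finset.mem_filter] at hx
    obtain ⟨hxU, hfx⟩ := hx
    rw [hUdef, Finset.mem_filter] at hxU
    exact ⟨hxU.1, hfx, hxU.2⟩
  have hfilterC : ∀ x ∈ C,
      X.filter (fun y => f y = f x ∧ ¬∃ c ∈ S, f c = f y) = C := by
    intro x hx
    obtain ⟨hxX, hfx, hxunc⟩ := hCfacts x hx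
    ext y
    rw [Finset.mem_filter, hCdef, Finset.mem_filter, hUdef, Finset.mem_filter, hfx]
    constructor
    · rintro ⟨hyX, hfy, hync⟩
      exact ⟨⟨hyX, hync⟩, hfy⟩
    · rintro ⟨⟨hyX, hync⟩, hfy⟩
      exact ⟨hyX, hfy, hync⟩
  have hMfib : ∀ x ∈ C, newCost X f S x = ∑ y ∈ C, min (p y) (‖y - x‖ ^ 2) := by
    intro x hx
    unfold newCost
    rw [← Finset.sum_filter, hfilterC x hx]
  have hNfib : ∀ x ∈ C, newOpt X f S x = ∑ y ∈ C, ‖y - v‖ ^ 2 := by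
    intro x hx
    unfold newOpt
    rw [← Finset.sum_filter, hfilterC x hx]
    refine Finset.sum_congr rfl fun y hy => ?_
    rw [(hCfacts y hy).2.1]
  have htri : ∀ x ∈ C, ∀ z ∈ C, w x ≤ 2 * w z + 2 * a * ‖x - z‖ ^ 2 := by
    intro x _ z _
    have htr : p x ≤ 2 * p z + 2 * ‖x - z‖ ^ 2 := ptCost_triangle x z S
    have h2 : a * p x ≤ a * (2 * p z + 2 * ‖x - z‖ ^ 2) :=
      mul_le_mul_of_nonneg_left htr ha
    rw [hwa x, hwa z]
    nlinarith [hb]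
  have hap : a * ∑ y ∈ C, p y ≤ ∑ y ∈ C, w y := by
    rw [Finset.mul_sum]
    refine Finset.sum_le_sum fun y _ => ?_
    rw [hwa y]
    linarith [hb]
  have hav := av_lemma C v w p a ha (fun x _ => hw0 x) (fun x _ => hp0 x) htri hap
  calc ∑ x ∈ C, w x * newCost X f S x
      = ∑ x ∈ C, w x * ∑ y ∈ C, min (p y) (‖y - x‖ ^ 2) :=
        Finset.sum_congr rfl fun x hx => by rw [hMfib x hx]
    _ ≤ 8 * (∑ y ∈ C, ‖y - v‖ ^ 2) * ∑ x ∈ C, w x := hav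
    _ = 8 * ∑ x ∈ C, w x * newOpt X f S x := by
        have heq : ∑ x ∈ C, w x * newOpt X f S x
            = (∑ x ∈ C, w x) * ∑ y ∈ C, ‖y - v‖ ^ 2 := by
          rw [Finset.sum_mul]
          exact Finset.sum_congr rfl fun x hx => by rw [hNfib x hx]
        rw [heq]
        ring

lemma main_claim (X : Finset E) (hX : X.Nonempty) (f : E → E) {δ : ℝ}
    (hδ0 : 0 ≤ δ) (hδ1 : δ ≤ 1) :
    ∀ (t : ℕ) (S : List E), S ≠ [] →
      expCoveredCost X f δ t S ≤ coveredCost X f S + 8 * uncovOpt X f S := by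
  intro t
  induction t with
  | zero =>
    intro S hS
    have h := uncovOpt_nonneg X f S
    show coveredCost X f S ≤ coveredCost X f S + 8 * uncovOpt X f S
    linarith
  | succ t ih =>
    intro S hS
    have hw0 : ∀ x, 0 ≤ stepWeight X δ S x := fun x => stepWeight_nonneg X S x hδ0 hδ1
    have hws : ∑ x ∈ X, stepWeight X δ S x ≤ 1 := stepWeight_sum_le_one X S hX hδ0 hδ1
    have hcov0 : 0 ≤ coveredCost X f S := coveredCost_nonneg X f S
    have hunc0 : 0 ≤ uncovOpt X f S := uncovOpt_nonneg X f S
    have hkey := key_step X f S hδ0 hδ1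
    show ∑ x ∈ X, stepWeight X δ S x * expCoveredCost X f δ t (x :: S)
        ≤ coveredCost X f S + 8 * uncovOpt X f S
    calc ∑ x ∈ X, stepWeight X δ S x * expCoveredCost X f δ t (x :: S)
        ≤ ∑ x ∈ X, stepWeight X δ S x *
            ((coveredCost X f S + newCost X f S x)
              + 8 * (uncovOpt X f S - newOpt X f S x)) := by
          refine Finset.sum_le_sum fun x hx => mul_le_mul_of_nonneg_left ?_ (hw0 x)
          have h1 := ih (x :: S) (List.cons_ne_nil _ _)
          have h2 := covered_cons_le X f hS x
          have h3 := uncov_cons X f S x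
          rw [h3] at h1
          linarith
      _ = (∑ x ∈ X, stepWeight X δ S x) * (coveredCost X f S + 8 * uncovOpt X f S)
          + (∑ x ∈ X, stepWeight X δ S x * newCost X f S x
            - 8 * ∑ x ∈ X, stepWeight X δ S x * newOpt X f S x) := by
          rw [Finset.sum_mul, Finset.mul_sum, ← Finset.sum_sub_distrib,
            ← Finset.sum_add_distrib]
          exact Finset.sum_congr rfl fun x _ => by ring
      _ ≤ 1 * (coveredCost X f S + 8 * uncovOpt X f S) + 0 := by
          refine add_le_add ?_ (by linarith)
          exact mul_le_mul_of_nonneg_right hws (by linarith)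
      _ = coveredCost X f S + 8 * uncovOpt X f S := by ring

lemma ptCost_singleton (x c : E) : ptCost x [c] = ‖x - c‖ ^ 2 := by
  unfold ptCost
  have h : {c' | c' ∈ [c]} = {c} := by
    ext c'
    simp
  rw [h, Set.image_singleton, csInf_singleton]

lemma sq_norm_sub_le' (u v : E) : ‖u - v‖ ^ 2 ≤ 2 * ‖u‖ ^ 2 + 2 * ‖v‖ ^ 2 := by
  nlinarith [norm_sub_le u v, norm_nonneg u, norm_nonneg v, norm_nonneg (u - v),
    sq_nonneg (‖u‖ - ‖v‖)]

lemma final_avg (X : Finset E) (f : E → E) :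
    ∑ c ∈ X, (coveredCost X f [c] + 8 * uncovOpt X f [c])
      ≤ 8 * (X.card : ℝ) * ∑ x ∈ X, ‖x - f x‖ ^ 2 := by
  classical
  have hcov : ∀ c, coveredCost X f [c]
      = ∑ y ∈ X, if f c = f y then ‖y - c‖ ^ 2 else 0 := by
    intro c
    unfold coveredCost
    refine Finset.sum_congr rfl fun y hy => ?_
    by_cases h : f c = f y
    · rw [if_pos ⟨c, List.mem_singleton_self c, h⟩, if_pos h, ptCost_singleton]
    · rw [if_neg ?_, if_neg h]
      rintro ⟨c', hc', hfc⟩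
      rw [List.mem_singleton] at hc'
      subst hc'
      exact h hfc
  have huncov : ∀ c, uncovOpt X f [c]
      = ∑ y ∈ X, (‖y - f y‖ ^ 2 - if f c = f y then ‖y - f y‖ ^ 2 else 0) := by
    intro c
    unfold uncovOpt
    refine Finset.sum_congr rfl fun y hy => ?_
    by_cases h : f c = f y
    · rw [if_pos ⟨c, List.mem_singleton_self c, h⟩, if_pos h, sub_self]
    · rw [if_neg ?_, if_neg h, sub_zero]
      rintro ⟨c', hc', hfc⟩
      rw [List.mem_singleton] at hc'
      subst hc'
      exact h hfc
  set B : ℝ := ∑ c ∈ X, ∑ y ∈ X, (if f c = f y then ‖y - f y‖ ^ 2 else 0) with hBdef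
  have hB0 : 0 ≤ B := Finset.sum_nonneg fun c _ => Finset.sum_nonneg fun y _ => by
    split_ifs
    · positivity
    · exact le_refl 0
  have hswap : ∑ c ∈ X, ∑ y ∈ X, (if f c = f y then ‖c - f c‖ ^ 2 else 0) = B := by
    rw [hBdef, Finset.sum_comm]
    exact Finset.sum_congr rfl fun y _ => Finset.sum_congr rfl fun c _ =>
      if_congr eq_comm rfl rfl
  have hA : ∑ c ∈ X, ∑ y ∈ X, (if f c = f y then ‖y - c‖ ^ 2 else 0) ≤ 4 * B := by
    have hpt : ∀ c ∈ X, ∀ y ∈ X, (if f c = f y then ‖y - c‖ ^ 2 else 0)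
        ≤ 2 * (if f c = f y then ‖y - f y‖ ^ 2 else 0)
          + 2 * (if f c = f y then ‖c - f c‖ ^ 2 else 0) := by
      intro c _ y _
      by_cases h : f c = f y
      · simp only [if_pos h]
        have he : y - c = (y - f y) - (c - f c) := by
          rw [h]; abel
        rw [he]
        exact sq_norm_sub_le' _ _
      · simp only [if_neg h]
        linarith
    calc ∑ c ∈ X, ∑ y ∈ X, (if f c = f y then ‖y - c‖ ^ 2 else 0)
        ≤ ∑ c ∈ X, ∑ y ∈ X, (2 * (if f c = f y then ‖y - f y‖ ^ 2 else 0)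
            + 2 * (if f c = f y then ‖c - f c‖ ^ 2 else 0)) :=
          Finset.sum_le_sum fun c hc => Finset.sum_le_sum fun y hy => hpt c hc y hy
      _ = 2 * B + 2 * B := by
          simp only [Finset.sum_add_distrib, ← Finset.mul_sum]
          rw [hswap, ← hBdef]
      _ = 4 * B := by ring
  have h2 : ∑ c ∈ X, uncovOpt X f [c]
      = (X.card : ℝ) * (∑ y ∈ X, ‖y - f y‖ ^ 2) - B := by
    calc ∑ c ∈ X, uncovOpt X f [c]
        = ∑ c ∈ X, ((∑ y ∈ X, ‖y - f y‖ ^ 2)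
            - ∑ y ∈ X, (if f c = f y then ‖y - f y‖ ^ 2 else 0)) := by
          refine Finset.sum_congr rfl fun c _ => ?_
          rw [huncov c, Finset.sum_sub_distrib]
      _ = (X.card : ℝ) * (∑ y ∈ X, ‖y - f y‖ ^ 2) - B := by
          rw [Finset.sum_sub_distrib, Finset.sum_const, nsmul_eq_mul, hBdef]
  have h1 : ∑ c ∈ X, coveredCost X f [c]
      = ∑ c ∈ X, ∑ y ∈ X, (if f c = f y then ‖y - c‖ ^ 2 else 0) :=
    Finset.sum_congr rfl fun c _ => hcov c
  calc ∑ c ∈ X, (coveredCost X f [c] + 8 * uncovOpt X f [c])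
      = ∑ c ∈ X, coveredCost X f [c] + 8 * ∑ c ∈ X, uncovOpt X f [c] := by
        rw [Finset.sum_add_distrib, ← Finset.mul_sum]
    _ ≤ 4 * B + 8 * ((X.card : ℝ) * (∑ y ∈ X, ‖y - f y‖ ^ 2) - B) := by
        rw [h1, h2]
        linarith
    _ ≤ 8 * (X.card : ℝ) * ∑ x ∈ X, ‖x - f x‖ ^ 2 := by linarith

/-- In `δ`-`k`-means++ (first center uniform from `X`, subsequent centers via
`δ`-perturbed `D²` sampling), at any step `t` the expected total cost of the
covered optimal clusters satisfies
`E[Δᵗ(H_t)] ≤ 8·Δ_k(X) + (2δ/(1-δ))·Δ₁(X)`. -/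
theorem expected_covered_cost_bound {d : ℕ} (X : Finset (EuclideanSpace ℝ (Fin d)))
    (hX : X.Nonempty) (k : ℕ) (hk : 1 ≤ k)
    (Copt : Finset (EuclideanSpace ℝ (Fin d))) (hCk : Copt.card = k)
    (hCopt : Copt.Nonempty)
    (f : EuclideanSpace ℝ (Fin d) → EuclideanSpace ℝ (Fin d))
    (hf : ∀ x ∈ X, f x ∈ Copt)
    (hfmin : ∀ x ∈ X, ‖x - f x‖ ^ 2 = ptCost x Copt.toList)
    (hopt : ∀ C : Finset (EuclideanSpace ℝ (Fin d)), C.Nonempty → C.card = k →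
      setCost X Copt.toList ≤ setCost X C.toList)
    (δ : ℝ) (hδ₀ : 0 < δ) (hδ₁ : δ < 1 / 2) :
    ∀ t : ℕ, 1 ≤ t →
      (X.card : ℝ)⁻¹ * ∑ c ∈ X, expCoveredCost X f δ (t - 1) [c]
        ≤ 8 * setCost X Copt.toList
          + (2 * δ / (1 - δ)) * ∑ x ∈ X, ‖x - (X.card : ℝ)⁻¹ • ∑ y ∈ X, y‖ ^ 2 := by
  intro t ht
  have hδ1 : δ ≤ 1 := by linarith
  have hδ0 : 0 ≤ δ := le_of_lt hδ₀
  have hcard : (0:ℝ) < (X.card : ℝ) := by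
    have := Finset.card_pos.mpr hX
    exact_mod_cast this
  have hΔ : ∑ x ∈ X, ‖x - f x‖ ^ 2 = setCost X Copt.toList :=
    Finset.sum_congr rfl fun x hx => hfmin x hx
  have hbound : ∑ c ∈ X, expCoveredCost X f δ (t - 1) [c]
      ≤ 8 * (X.card : ℝ) * setCost X Copt.toList := by
    calc ∑ c ∈ X, expCoveredCost X f δ (t - 1) [c]
        ≤ ∑ c ∈ X, (coveredCost X f [c] + 8 * uncovOpt X f [c]) :=
          Finset.sum_le_sum fun c _ =>
            main_claim X hX f hδ0 hδ1 (t - 1) [c] (List.cons_ne_nil _ _)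
      _ ≤ 8 * (X.card : ℝ) * ∑ x ∈ X, ‖x - f x‖ ^ 2 := final_avg X f
      _ = 8 * (X.card : ℝ) * setCost X Copt.toList := by rw [hΔ]
  have hmain : (X.card : ℝ)⁻¹ * ∑ c ∈ X, expCoveredCost X f δ (t - 1) [c]
      ≤ 8 * setCost X Copt.toList := by
    have h := mul_le_mul_of_nonneg_left hbound (inv_nonneg.mpr (le_of_lt hcard))
    have he : (X.card : ℝ)⁻¹ * (8 * (X.card : ℝ) * setCost X Copt.toList)
        = 8 * setCost X Copt.toList := by
      field_simp
    linarith [he ▸ h]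
  have hextra : 0 ≤ (2 * δ / (1 - δ)) * ∑ x ∈ X, ‖x - (X.card : ℝ)⁻¹ • ∑ y ∈ X, y‖ ^ 2 := by
    have h1 : 0 ≤ 2 * δ / (1 - δ) := div_nonneg (by linarith) (by linarith)
    have h2 : 0 ≤ ∑ x ∈ X, ‖x - (X.card : ℝ)⁻¹ • ∑ y ∈ X, y‖ ^ 2 :=
      Finset.sum_nonneg fun x _ => by positivity
    positivity
  linarith
end
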